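/- arXiv:2005.12414 — 7 statements merged into one kernel-verified Lean document; each statement's English description precedes it below -/
import Mathlib

section
/- Fix integers m ≥ 1, u_max ≥ 1 and R ≥ 0, an m×n real matrix A, a contiguous column partition Φ = (Φ_1,…,Φ_L) of {1,…,n} with part sizes w_l = |Φ_l|, and real coefficient vectors α : ℕ → ℝ and β_row, β_col : ℕ × {1,…,R} → ℝ. For 1 ≤ i < i′ ≤ m+1 let γ(i,i′) := { l ∈ {1,…,L} : A[r,j] ≠ 0 for some i ≤ r ≤ i′−1 and some j ∈ Φ_l }. For a contiguous row partition Π of {1,…,m} with parts Π_k = {t_{k−1},…,t_k−1} (where 1 = t_0 < t_1 < ⋯ < t_K = m+1), define cost(Π) := Σ_{k=1}^{K} [ α(t_k − t_{k−1}) + Σ_{l ∈ γ(t_{k−1},t_k)} Σ_{r=1}^{R} β_row(t_k − t_{k−1}, r)·β_col(w_l, r) ]. Define c(m+1) := 0 and, backwards for i = m, m−1, …, 1, c(i) := min over 1 ≤ u ≤ min(u_max, m+1−i) of [ α(u) + Σ_{r=1}^{R} β_row(u,r)·( Σ_{l ∈ γ(i,i+u)} β_col(w_l,r) ) + c(i+u)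 ]. Then c(1) is equal to the minimum of cost(Π) over all contiguous row partitions Π of {1,…,m} in which every part has size at most u_max. -/
open Finset
open scoped Classical

/-- A contiguous partition of `{0, …, m-1}` into `K` nonempty consecutive intervals,
represented by its split points `t 0 = 0 < t 1 < ⋯ < t K = m`; the `k`-th part
(for `0 ≤ k < K`) is the interval `[t k, t (k+1))`. -/
structure ContigPartition (m : ℕ) where
  K : ℕ
  t : ℕ → ℕ
  t0 : t 0 = 0
  tK : t K = m
  mono : ∀ k < K, t k < t (k + 1)

/-- Block `(k, l)` of `A` (rows from part `k` of `P`, columns from part `l` of `Q`)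
contains a nonzero entry of `A`. -/
def blockNonzero {m n : ℕ} (A : Matrix (Fin m) (Fin n) ℝ)
    (P : ContigPartition m) (Q : ContigPartition n) (k l : ℕ) : Prop :=
  ∃ i : Fin m, ∃ j : Fin n,
    P.t k ≤ (i : ℕ) ∧ (i : ℕ) < P.t (k + 1) ∧
    Q.t l ≤ (j : ℕ) ∧ (j : ℕ) < Q.t (l + 1) ∧ A i j ≠ 0

/-- `N_index(A, P, Q)`: the number of nonzero blocks. -/
noncomputable def Nindex {m n : ℕ} (A : Matrix (Fin m) (Fin n) ℝ)
    (P : ContigPartition m) (Q : ContigPartition n) : ℕ :=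
  ((Finset.range P.K ×ˢ Finset.range Q.K).filter
    (fun kl => blockNonzero A P Q kl.1 kl.2)).card

/-- `N_value(A, P, Q)`: the total number of entries in all nonzero blocks. -/
noncomputable def Nvalue {m n : ℕ} (A : Matrix (Fin m) (Fin n) ℝ)
    (P : ContigPartition m) (Q : ContigPartition n) : ℕ :=
  ∑ kl ∈ (Finset.range P.K ×ˢ Finset.range Q.K).filter
      (fun kl => blockNonzero A P Q kl.1 kl.2),
    (P.t (kl.1 + 1) - P.t kl.1) * (Q.t (kl.2 + 1) - Q.t kl.2)

/-- `γ(i, i')`: the set of column parts of `Q` containing a nonzero entry of `A`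
in some row `r` with `i ≤ r < i'`. -/
noncomputable def gam {m n : ℕ} (A : Matrix (Fin m) (Fin n) ℝ)
    (Q : ContigPartition n) (i i' : ℕ) : Finset ℕ :=
  (Finset.range Q.K).filter (fun l => ∃ r : Fin m, ∃ j : Fin n,
    i ≤ (r : ℕ) ∧ (r : ℕ) < i' ∧ Q.t l ≤ (j : ℕ) ∧ (j : ℕ) < Q.t (l + 1) ∧ A r j ≠ 0)

/-- The rank-`R` cost of a row partition `P` (with the column partition `Q`
fixed, so the constant column terms are omitted):
`Σ_k [ α(u_k) + Σ_{l ∈ γ_k} Σ_r β_row(u_k, r) · β_col(w_l, r) ]`. -/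
noncomputable def rowCost {m n : ℕ} (A : Matrix (Fin m) (Fin n) ℝ)
    (P : ContigPartition m) (Q : ContigPartition n)
    (R : ℕ) (α : ℕ → ℝ) (βrow βcol : ℕ → ℕ → ℝ) : ℝ :=
  ∑ k ∈ Finset.range P.K,
    (α (P.t (k + 1) - P.t k) +
      ∑ l ∈ gam A Q (P.t k) (P.t (k + 1)),
        ∑ r ∈ Finset.range R,
          βrow (P.t (k + 1) - P.t k) r * βcol (Q.t (l + 1) - Q.t l) r)

/- The cost of a row partition is a sum of block costs `w (t k) (t (k+1))`, and the recurrence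
says that `c i ≤ w i j + c j` for every admissible next split point `j`, with equality for
some `j`. Since `∑ k, (c (t k) - c (t (k+1))) = c 0 - c m = c 0` telescopes along any
partition, the inequality bounds every cost from below by `c 0`, and the partition obtained
by iterating a choice of optimal next split points attains it. -/

section Iterate

variable {m : ℕ} (g : ℕ → ℕ) (hg : ∀ i < m, i < g i ∧ g i ≤ m)
include hg

theorem exists_iterate_zero_eq : ∃ k, g^[k] 0 = m := by
  by_contra! hne
  have hbound : ∀ k, k ≤ g^[k] 0 ∧ g^[k] 0 ≤ m := by
    intro k
    induction k with
    | zero => simp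
    | succ k ih =>
      obtain ⟨hlt, hle⟩ := hg _ (lt_of_le_of_ne ih.2 (hne k))
      rw [Function.iterate_succ_apply']
      omega
  have := hbound (m + 1)
  omega

theorem iterate_zero_lt_of_lt_find {k : ℕ} (hk : k < Nat.find (exists_iterate_zero_eq g hg)) :
    g^[k] 0 < m := by
  induction k with
  | zero => exact lt_of_le_of_ne (Nat.zero_le m) (Nat.find_min (exists_iterate_zero_eq g hg) hk)
  | succ k ih =>
    refine lt_of_le_of_ne ?_ (Nat.find_min (exists_iterate_zero_eq g hg) hk)
    rw [Function.iterate_succ_apply']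
    exact (hg _ (ih (by omega))).2

end Iterate

namespace ContigPartition

variable {m : ℕ}

theorem t_le (P : ContigPartition m) {k : ℕ} (hk : k ≤ P.K) : P.t k ≤ m := by
  have hmono : StrictMonoOn P.t (Set.Iic P.K) :=
    strictMonoOn_Iic_of_lt_succ fun k hk => P.mono k hk
  calc P.t k ≤ P.t P.K := hmono.monotoneOn hk Set.self_mem_Iic hk
    _ = m := P.tK

theorem sum_range_sub_eq (P : ContigPartition m) (f : ℕ → ℝ) :
    ∑ k ∈ range P.K, (f (P.t k) - f (P.t (k + 1))) = f 0 - f m := by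
  rw [sum_range_sub', P.t0, P.tK]

section OfStep

variable (g : ℕ → ℕ) (hg : ∀ i < m, i < g i ∧ g i ≤ m)

noncomputable def ofStep : ContigPartition m where
  K := Nat.find (exists_iterate_zero_eq g hg)
  t k := g^[k] 0
  t0 := rfl
  tK := Nat.find_spec (exists_iterate_zero_eq g hg)
  mono k hk := by
    rw [Function.iterate_succ_apply']
    exact (hg _ (iterate_zero_lt_of_lt_find g hg hk)).1

theorem ofStep_t_succ (k : ℕ) : (ofStep g hg).t (k + 1) = g ((ofStep g hg).t k) :=
  Function.iterate_succ_apply' g k 0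

theorem ofStep_t_lt {k : ℕ} (hk : k < (ofStep g hg).K) : (ofStep g hg).t k < m :=
  iterate_zero_lt_of_lt_find g hg hk

end OfStep

theorem isLeast_sum_of_bellman {U : ℕ} (w : ℕ → ℕ → ℝ) (c : ℕ → ℝ) (hcm : c m = 0)
    (hle : ∀ i j, i < j → j ≤ m → j - i ≤ U → c i ≤ w i j + c j)
    (hex : ∀ i < m, ∃ j, i < j ∧ j ≤ m ∧ j - i ≤ U ∧ c i = w i j + c j) :
    IsLeast {x : ℝ | ∃ P : ContigPartition m, (∀ k < P.K, P.t (k + 1) - P.t k ≤ U) ∧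
      ∑ k ∈ range P.K, w (P.t k) (P.t (k + 1)) = x} (c 0) := by
  constructor
  · choose! g hg using hex
    let P := ofStep g fun i hi => ⟨(hg i hi).1, (hg i hi).2.1⟩
    refine ⟨P, fun k hk => ?_, ?_⟩
    · rw [ofStep_t_succ]
      exact (hg _ (ofStep_t_lt _ _ hk)).2.2.1
    · rw [← sub_zero (c 0), ← hcm, ← P.sum_range_sub_eq c]
      refine sum_congr rfl fun k hk => ?_
      rw [ofStep_t_succ, (hg _ (ofStep_t_lt _ _ (mem_range.mp hk))).2.2.2]
      ring
  · rintro x ⟨P, hP, rfl⟩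
    rw [← sub_zero (c 0), ← hcm, ← P.sum_range_sub_eq c]
    refine sum_le_sum fun k hk => ?_
    have hk := mem_range.mp hk
    have := hle _ _ (P.mono k hk) (P.t_le hk) (hP k hk)
    linarith

end ContigPartition

noncomputable def blockCost {m n : ℕ} (A : Matrix (Fin m) (Fin n) ℝ) (Q : ContigPartition n)
    (R : ℕ) (α : ℕ → ℝ) (βrow βcol : ℕ → ℕ → ℝ) (i i' : ℕ) : ℝ :=
  α (i' - i) +
    ∑ r ∈ range R, βrow (i' - i) r * ∑ l ∈ gam A Q i i', βcol (Q.t (l + 1) - Q.t l) r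

theorem rowCost_eq_sum_blockCost {m n : ℕ} (A : Matrix (Fin m) (Fin n) ℝ)
    (P : ContigPartition m) (Q : ContigPartition n)
    (R : ℕ) (α : ℕ → ℝ) (βrow βcol : ℕ → ℕ → ℝ) :
    rowCost A P Q R α βrow βcol =
      ∑ k ∈ range P.K, blockCost A Q R α βrow βcol (P.t k) (P.t (k + 1)) := by
  simp only [rowCost, blockCost, mul_sum]
  exact sum_congr rfl fun _ _ => congrArg _ sum_comm

/-- Optimality of the dynamic-programming row partitioner: if `c` satisfies the
backwards recurrence `c m = 0` and, for `i < m`,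
`c i = min_{1 ≤ u ≤ min(u_max, m − i)} [α(u) + Σ_r β_row(u,r)·Σ_{l ∈ γ(i,i+u)} β_col(w_l,r) + c (i+u)]`,
then `c 0` is the minimum of `rowCost` over all contiguous row partitions whose
parts all have size at most `u_max`. -/
theorem dp_row_partition_optimal {m n : ℕ}
    (u_max : ℕ) (hu : 1 ≤ u_max) (R : ℕ)
    (A : Matrix (Fin m) (Fin n) ℝ) (Q : ContigPartition n)
    (α : ℕ → ℝ) (βrow βcol : ℕ → ℕ → ℝ)
    (c : ℕ → ℝ) (hcm : c m = 0)
    (hrec : ∀ i, ∀ hi : i < m,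
      c i = (Finset.Icc 1 (min u_max (m - i))).inf'
        (Finset.nonempty_Icc.mpr (le_min hu (by omega)))
        (fun u => α u +
          (∑ r ∈ Finset.range R,
            βrow u r * ∑ l ∈ gam A Q i (i + u), βcol (Q.t (l + 1) - Q.t l) r) +
          c (i + u))) :
    IsLeast { x : ℝ | ∃ P : ContigPartition m,
        (∀ k < P.K, P.t (k + 1) - P.t k ≤ u_max) ∧
        rowCost A P Q R α βrow βcol = x } (c 0) := by
  set w := blockCost A Q R α βrow βcol
  have hbellman : ∀ i (hi : i < m), c i = (Icc 1 (min u_max (m - i))).inf'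
      (nonempty_Icc.mpr (le_min hu (by omega))) (fun u => w i (i + u) + c (i + u)) := by
    simpa only [w, blockCost, Nat.add_sub_cancel_left] using hrec
  simp only [rowCost_eq_sum_blockCost]
  refine ContigPartition.isLeast_sum_of_bellman w c hcm (fun i j hij hjm hjU => ?_)
    fun i hi => ?_
  · obtain ⟨u, rfl⟩ := Nat.exists_eq_add_of_lt hij
    have hmem : u + 1 ∈ Icc 1 (min u_max (m - i)) := by simp only [mem_Icc]; omega
    exact (hbellman i (by omega)).trans_le (inf'_le _ hmem)
  · obtain ⟨u, hmem, hmin⟩ := exists_mem_eq_inf'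
      (nonempty_Icc.mpr (le_min hu (by omega : 1 ≤ m - i))) fun u => w i (i + u) + c (i + u)
    rw [mem_Icc, le_min_iff] at hmem
    exact ⟨i + u, by omega, by omega, by omega, (hbellman i hi).trans hmin⟩
end

section
/- Let A be an m×n real matrix and let B be the (m+n)×(m+n) real matrix given in block form by B = [[0, A], [Aᵀ, 0]], i.e., B[i, m+j] = A[i,j] and B[m+j, i] = A[i,j] for 1 ≤ i ≤ m, 1 ≤ j ≤ n, and B[i,i′] = 0 whenever i,i′ ≤ m or i,i′ > m. Let Λ be a contiguous partition of {1,…,m+n} such that no part of Λ contains both m and m+1, let Π be the contiguous partition of {1,…,m} formed by the parts of Λ contained in {1,…,m}, and let Φ be the contiguous partition of {1,…,n} formed by the parts of Λ contained in {m+1,…,m+n}, shifted down by m. Then, using Λ as both the row and the column partition of B, N_index(B,Λ,Λ) = 2·N_index(A,Π,Φ) and N_value(B,Λ,Λ) = 2·N_value(A,Π,Φ). -/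
open Finset
open scoped Classical

lemma ContigPartition_t_mono {m : ℕ} (L : ContigPartition m) {a b : ℕ}
    (hab : a ≤ b) (hb : b ≤ L.K) : L.t a ≤ L.t b := by
  obtain ⟨c, rfl⟩ := Nat.exists_eq_add_of_le hab
  clear hab
  induction c with
  | zero => exact le_rfl
  | succ c ih =>
    rw [← Nat.add_assoc]
    have h1 : a + c < L.K := by omega
    have := L.mono (a + c) h1
    have := ih (by omega)
    omega

/-- Symmetric-reduction computation: for `B = [[0, A], [Aᵀ, 0]]` and a contiguous
partition `Λ` of `{1,…,m+n}` whose parts do not straddle the boundary between the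
first `m` and the last `n` indices, using `Λ` as both row and column partition of
`B` doubles both `N_index` and `N_value` of the induced partitions `(P, Q)` of `A`. -/
theorem symmetric_reduction {m n : ℕ} (A : Matrix (Fin m) (Fin n) ℝ)
    (B : Matrix (Fin (m + n)) (Fin (m + n)) ℝ)
    (hB1 : ∀ (i : Fin m) (j : Fin n), B (Fin.castAdd n i) (Fin.natAdd m j) = A i j)
    (hB2 : ∀ (i : Fin m) (j : Fin n), B (Fin.natAdd m j) (Fin.castAdd n i) = A i j)
    (hB3 : ∀ (i i' : Fin m), B (Fin.castAdd n i) (Fin.castAdd n i') = 0)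
    (hB4 : ∀ (j j' : Fin n), B (Fin.natAdd m j) (Fin.natAdd m j') = 0)
    (L : ContigPartition (m + n))
    (hL : ∀ k < L.K, L.t (k + 1) ≤ m ∨ m ≤ L.t k)
    (P : ContigPartition m) (Q : ContigPartition n)
    (hPK : P.K ≤ L.K) (hsplit : L.t P.K = m)
    (hPt : ∀ k ≤ P.K, P.t k = L.t k)
    (hQK : Q.K = L.K - P.K)
    (hQt : ∀ l ≤ Q.K, Q.t l = L.t (P.K + l) - m) :
    Nindex B L L = 2 * Nindex A P Q ∧ Nvalue B L L = 2 * Nvalue A P Q := by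
  -- basic facts
  have hLle : ∀ k ≤ P.K, L.t k ≤ m := fun k hk => by
    have := ContigPartition_t_mono L hk hPK; omega
  have hLge : ∀ k, P.K ≤ k → k ≤ L.K → m ≤ L.t k := fun k hk hk' => by
    have := ContigPartition_t_mono L hk hk'; omega
  have hQt' : ∀ l ≤ Q.K, L.t (P.K + l) = m + Q.t l := by
    intro l hl
    have h1 : P.K + l ≤ L.K := by omega
    have := hLge (P.K + l) (by omega) h1
    have := hQt l hl
    omega
  -- decomposition of Fin (m+n)
  have castv : ∀ (i : Fin m), ((Fin.castAdd n i : Fin (m+n)) : ℕ) = (i : ℕ) := fun i => rfl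
  have natv : ∀ (j : Fin n), ((Fin.natAdd m j : Fin (m+n)) : ℕ) = m + (j : ℕ) := fun j => rfl
  -- key characterization
  have key : ∀ k k', k < L.K → k' < L.K →
      (blockNonzero B L L k k' ↔
        (k < P.K ∧ P.K ≤ k' ∧ blockNonzero A P Q k (k' - P.K)) ∨
        (P.K ≤ k ∧ k' < P.K ∧ blockNonzero A P Q k' (k - P.K))) := by
    intro k k' hk hk'
    constructor
    · rintro ⟨i, j, hi1, hi2, hj1, hj2, hne⟩
      by_cases hkP : k < P.K
      · -- i lies in first block
        have him : (i : ℕ) < m := lt_of_lt_of_le hi2 (hLle (k+1) (by omega))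
        by_cases hkP' : k' < P.K
        · exfalso
          have hjm : (j : ℕ) < m := lt_of_lt_of_le hj2 (hLle (k'+1) (by omega))
          have : i = Fin.castAdd n ⟨i, him⟩ := by ext; rfl
          have hj : j = Fin.castAdd n ⟨j, hjm⟩ := by ext; rfl
          rw [this, hj, hB3] at hne
          exact hne rfl
        · left
          push_neg at hkP'
          refine ⟨hkP, hkP', ?_⟩
          have hjm : m ≤ (j : ℕ) := le_trans (hLge k' hkP' (by omega)) hj1
          have hjn : (j : ℕ) - m < n := by omega
          have hi : i = Fin.castAdd n ⟨i, him⟩ := by ext; rfl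
          have hj : j = Fin.natAdd m ⟨(j : ℕ) - m, hjn⟩ := by
            ext; simp [natv]; omega
          rw [hi, hj, hB1] at hne
          refine ⟨⟨i, him⟩, ⟨(j : ℕ) - m, hjn⟩, ?_, ?_, ?_, ?_, hne⟩
          · rw [hPt k (by omega)]; exact hi1
          · rw [hPt (k+1) (by omega)]; exact hi2
          · have := hQt' (k' - P.K) (by omega)
            rw [show P.K + (k' - P.K) = k' by omega] at this
            simp only []
            omega
          · have := hQt' (k' - P.K + 1) (by omega)
            rw [show P.K + (k' - P.K + 1) = k' + 1 by omega] at this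
            simp only []
            omega
      · push_neg at hkP
        have him : m ≤ (i : ℕ) := le_trans (hLge k hkP (by omega)) hi1
        by_cases hkP' : k' < P.K
        · right
          refine ⟨hkP, hkP', ?_⟩
          have hjm : (j : ℕ) < m := lt_of_lt_of_le hj2 (hLle (k'+1) (by omega))
          have hin : (i : ℕ) - m < n := by omega
          have hi : i = Fin.natAdd m ⟨(i : ℕ) - m, hin⟩ := by
            ext; simp [natv]; omega
          have hj : j = Fin.castAdd n ⟨j, hjm⟩ := by ext; rfl
          rw [hi, hj, hB2] at hne
          refine ⟨⟨j, hjm⟩, ⟨(i : ℕ) - m, hin⟩, ?_, ?_, ?_, ?_, hne⟩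
          · rw [hPt k' (by omega)]; exact hj1
          · rw [hPt (k'+1) (by omega)]; exact hj2
          · have := hQt' (k - P.K) (by omega)
            rw [show P.K + (k - P.K) = k by omega] at this
            simp only []
            omega
          · have := hQt' (k - P.K + 1) (by omega)
            rw [show P.K + (k - P.K + 1) = k + 1 by omega] at this
            simp only []
            omega
        · exfalso
          push_neg at hkP'
          have hjm : m ≤ (j : ℕ) := le_trans (hLge k' hkP' (by omega)) hj1
          have hin : (i : ℕ) - m < n := by omega
          have hjn : (j : ℕ) - m < n := by omega
          have hi : i = Fin.natAdd m ⟨(i : ℕ) - m, hin⟩ := by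
            ext; simp [natv]; omega
          have hj : j = Fin.natAdd m ⟨(j : ℕ) - m, hjn⟩ := by
            ext; simp [natv]; omega
          rw [hi, hj, hB4] at hne
          exact hne rfl
    · rintro (⟨hkP, hk'P, i0, j0, h1, h2, h3, h4, hne⟩ | ⟨hkP, hk'P, i0, j0, h1, h2, h3, h4, hne⟩)
      · refine ⟨Fin.castAdd n i0, Fin.natAdd m j0, ?_, ?_, ?_, ?_, ?_⟩
        · rw [castv, ← hPt k (by omega)]; exact h1
        · rw [castv, ← hPt (k+1) (by omega)]; exact h2
        · rw [natv]
          have := hQt' (k' - P.K) (by omega)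
          rw [show P.K + (k' - P.K) = k' by omega] at this
          omega
        · rw [natv]
          have := hQt' (k' - P.K + 1) (by omega)
          rw [show P.K + (k' - P.K + 1) = k' + 1 by omega] at this
          omega
        · rw [hB1]; exact hne
      · refine ⟨Fin.natAdd m j0, Fin.castAdd n i0, ?_, ?_, ?_, ?_, ?_⟩
        · rw [natv]
          have := hQt' (k - P.K) (by omega)
          rw [show P.K + (k - P.K) = k by omega] at this
          omega
        · rw [natv]
          have := hQt' (k - P.K + 1) (by omega)
          rw [show P.K + (k - P.K + 1) = k + 1 by omega] at this
          omega
        · rw [castv, ← hPt k' (by omega)]; exact h1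
        · rw [castv, ← hPt (k'+1) (by omega)]; exact h2
        · rw [hB2]; exact hne
  -- the finsets
  set SA := (Finset.range P.K ×ˢ Finset.range Q.K).filter
      (fun kl => blockNonzero A P Q kl.1 kl.2) with hSA
  set SB := (Finset.range L.K ×ˢ Finset.range L.K).filter
      (fun kl => blockNonzero B L L kl.1 kl.2) with hSB
  have hSBeq : SB = SA.image (fun kl => (kl.1, P.K + kl.2)) ∪
      SA.image (fun kl => (P.K + kl.2, kl.1)) := by
    ext ⟨k, k'⟩
    simp only [hSB, hSA, Finset.mem_filter, Finset.mem_union, Finset.mem_image,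
      Finset.mem_product, Finset.mem_range, Prod.mk.injEq, Prod.exists]
    constructor
    · rintro ⟨⟨hk, hk'⟩, hbz⟩
      rcases (key k k' hk hk').1 hbz with ⟨h1, h2, h3⟩ | ⟨h1, h2, h3⟩
      · left
        exact ⟨k, k' - P.K, ⟨⟨h1, by omega⟩, h3⟩, rfl, by omega⟩
      · right
        exact ⟨k', k - P.K, ⟨⟨h2, by omega⟩, h3⟩, by omega, rfl⟩
    · rintro (⟨a, b, ⟨⟨ha, hb⟩, hbz⟩, rfl, rfl⟩ | ⟨a, b, ⟨⟨ha, hb⟩, hbz⟩, rfl, rfl⟩)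
      · have hk : a < L.K := by omega
        have hk' : P.K + b < L.K := by omega
        refine ⟨⟨hk, hk'⟩, (key a (P.K + b) hk hk').2 ?_⟩
        left
        exact ⟨by omega, by omega, by rwa [show P.K + b - P.K = b by omega]⟩
      · have hk : P.K + b < L.K := by omega
        have hk' : a < L.K := by omega
        refine ⟨⟨hk, hk'⟩, (key (P.K + b) a hk hk').2 ?_⟩
        right
        exact ⟨by omega, by omega, by rwa [show P.K + b - P.K = b by omega]⟩
  have hdisj : Disjoint (SA.image (fun kl => (kl.1, P.K + kl.2)))
      (SA.image (fun kl => (P.K + kl.2, kl.1))) := by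
    rw [Finset.disjoint_left]
    rintro ⟨k, k'⟩ h1 h2
    simp only [hSA, Finset.mem_image, Finset.mem_filter, Finset.mem_product,
      Finset.mem_range, Prod.mk.injEq, Prod.exists] at h1 h2
    obtain ⟨a, b, ⟨⟨ha, hb⟩, _⟩, rfl, _⟩ := h1
    obtain ⟨a', b', ⟨⟨ha', hb'⟩, _⟩, h, _⟩ := h2
    omega
  have hinj1 : Set.InjOn (fun kl : ℕ × ℕ => (kl.1, P.K + kl.2)) SA := by
    rintro ⟨a, b⟩ _ ⟨a', b'⟩ _ h
    simp only [Prod.mk.injEq] at h ⊢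
    omega
  have hinj2 : Set.InjOn (fun kl : ℕ × ℕ => (P.K + kl.2, kl.1)) SA := by
    rintro ⟨a, b⟩ _ ⟨a', b'⟩ _ h
    simp only [Prod.mk.injEq] at h ⊢
    omega
  -- size equality on blocks
  have hsz1 : ∀ kl ∈ SA,
      (L.t (kl.1 + 1) - L.t kl.1) * (L.t (P.K + kl.2 + 1) - L.t (P.K + kl.2))
        = (P.t (kl.1 + 1) - P.t kl.1) * (Q.t (kl.2 + 1) - Q.t kl.2) := by
    rintro ⟨a, b⟩ hab
    dsimp only
    simp only [hSA, Finset.mem_filter, Finset.mem_product, Finset.mem_range] at hab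
    obtain ⟨⟨ha, hb⟩, -⟩ := hab
    have e1 := hPt a (by omega)
    have e2 := hPt (a+1) (by omega)
    have e3 := hQt' b (by omega)
    have e4 := hQt' (b+1) (by omega)
    rw [show P.K + (b+1) = P.K + b + 1 by omega] at e4
    rw [e1, e2]
    congr 1
    omega
  constructor
  · have : Nindex B L L = SB.card := rfl
    rw [this, hSBeq, Finset.card_union_of_disjoint hdisj,
      Finset.card_image_of_injOn hinj1, Finset.card_image_of_injOn hinj2]
    show SA.card + SA.card = 2 * SA.card
    ring
  · have : Nvalue B L L = ∑ kl ∈ SB, (L.t (kl.1 + 1) - L.t kl.1) * (L.t (kl.2 + 1) - L.t kl.2) := rfl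
    rw [this, hSBeq, Finset.sum_union hdisj,
      Finset.sum_image (fun x hx y hy h => hinj1 hx hy h),
      Finset.sum_image (fun x hx y hy h => hinj2 hx hy h)]
    have s1 : ∑ kl ∈ SA, (L.t (kl.1 + 1) - L.t kl.1) * (L.t (P.K + kl.2 + 1) - L.t (P.K + kl.2))
        = Nvalue A P Q := Finset.sum_congr rfl hsz1
    have s2 : ∑ kl ∈ SA, (L.t (P.K + kl.2 + 1) - L.t (P.K + kl.2)) * (L.t (kl.1 + 1) - L.t kl.1)
        = Nvalue A P Q := by
      rw [← s1]
      exact Finset.sum_congr rfl (fun x _ => mul_comm _ _)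
    show (∑ kl ∈ SA, (L.t (kl.1 + 1) - L.t kl.1) * (L.t (P.K + kl.2 + 1) - L.t (P.K + kl.2)))
      + (∑ kl ∈ SA, (L.t (P.K + kl.2 + 1) - L.t (P.K + kl.2)) * (L.t (kl.1 + 1) - L.t kl.1))
      = 2 * Nvalue A P Q
    rw [s1, s2]
    ring
end

section
/- Let A be an m×n real matrix, Φ any contiguous column partition of {1,…,n}, and Π a contiguous row partition of {1,…,m} having a part Π_k = {a,…,b}. Suppose a < c ≤ b and every entry of A in rows a,…,c−1 is zero. Let Π′ be the contiguous row partition obtained from Π by replacing the part Π_k with the two parts {a,…,c−1} and {c,…,b}. Then N_index(A,Π′,Φ) = N_index(A,Π,Φ) and N_value(A,Π′,Φ) ≤ N_value(A,Π,Φ); moreover, if A has a nonzero entry in some row in {c,…,b}, then N_value(A,Π′,Φ) < N_value(A,Π,Φ). -/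
open Finset
open scoped Classical

lemma find_part {n : ℕ} (Q : ContigPartition n) (j : ℕ) (hj : j < n) :
    ∃ l < Q.K, Q.t l ≤ j ∧ j < Q.t (l + 1) := by
  classical
  have h0 : Q.t 0 ≤ j := by simp [Q.t0]
  have hle : Q.t (Nat.findGreatest (fun l => Q.t l ≤ j) Q.K) ≤ j :=
    Nat.findGreatest_spec (P := fun l => Q.t l ≤ j) (Nat.zero_le _) h0
  have hlK : Nat.findGreatest (fun l => Q.t l ≤ j) Q.K ≤ Q.K :=
    Nat.findGreatest_le _
  set l := Nat.findGreatest (fun l => Q.t l ≤ j) Q.K with hl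
  have hlt : l < Q.K := by
    rcases hlK.lt_or_eq with h | h
    · exact h
    · exfalso; rw [h, Q.tK] at hle; omega
  refine ⟨l, hlt, hle, ?_⟩
  by_contra h
  push_neg at h
  exact Nat.findGreatest_is_greatest (Nat.lt_succ_self l) (by omega) h

/-- Splitting all-zero ('filler') rows off the top of a row part: if the part
`[P.t k, P.t (k+1))` is split at `c` into `[P.t k, c)` and `[c, P.t (k+1))`,
where all rows in `[P.t k, c)` are zero, then `N_index` is unchanged, `N_value`
does not increase, and `N_value` strictly decreases if `A` has a nonzero entry
in some row of `[c, P.t (k+1))`. -/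
theorem split_top_zero_rows {m n : ℕ} (A : Matrix (Fin m) (Fin n) ℝ)
    (Q : ContigPartition n) (P P' : ContigPartition m)
    (k : ℕ) (hk : k < P.K) (c : ℕ)
    (hac : P.t k < c) (hcb : c < P.t (k + 1))
    (hzero : ∀ i : Fin m, P.t k ≤ (i : ℕ) → (i : ℕ) < c → ∀ j : Fin n, A i j = 0)
    (hK' : P'.K = P.K + 1)
    (ht1 : ∀ k' ≤ k, P'.t k' = P.t k')
    (ht2 : P'.t (k + 1) = c)
    (ht3 : ∀ k', k + 1 ≤ k' → k' ≤ P.K → P'.t (k' + 1) = P.t k') :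
    Nindex A P' Q = Nindex A P Q ∧
    Nvalue A P' Q ≤ Nvalue A P Q ∧
    ((∃ i : Fin m, ∃ j : Fin n, c ≤ (i : ℕ) ∧ (i : ℕ) < P.t (k + 1) ∧ A i j ≠ 0) →
      Nvalue A P' Q < Nvalue A P Q) := by
  classical
  set f1 : ℕ → ℕ := fun k' => if k' < k then k' else k' + 1 with hf1
  have hf1inj : Function.Injective f1 := by
    intro a b h
    simp only [hf1] at h
    by_cases ha : a < k <;> by_cases hb : b < k <;> simp [ha, hb] at h <;> omega
  have hlo : ∀ k' < P.K, P'.t (f1 k') = if k' = k then c else P.t k' := by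
    intro k' hk'
    by_cases h1 : k' < k
    · simp only [hf1, if_pos h1, if_neg (by omega : ¬ k' = k)]
      exact ht1 k' (by omega)
    · by_cases h2 : k' = k
      · simp only [hf1, h2, if_neg (lt_irrefl k), if_pos rfl]
        exact ht2
      · simp only [hf1, if_neg h1, if_neg h2]
        exact ht3 k' (by omega) (by omega)
  have hhi : ∀ k' < P.K, P'.t (f1 k' + 1) = P.t (k' + 1) := by
    intro k' hk'
    by_cases h1 : k' < k
    · simp only [hf1, if_pos h1]
      exact ht1 (k' + 1) (by omega)
    · simp only [hf1, if_neg h1]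
      exact ht3 (k' + 1) (by omega) (by omega)
  have hblock : ∀ k' < P.K, ∀ l, blockNonzero A P' Q (f1 k') l ↔ blockNonzero A P Q k' l := by
    intro k' hk' l
    unfold blockNonzero
    rw [hlo k' hk', hhi k' hk']
    by_cases h2 : k' = k
    · rw [if_pos h2]
      subst h2
      constructor
      · rintro ⟨i, j, h1, h2, h3, h4, h5⟩
        exact ⟨i, j, by omega, h2, h3, h4, h5⟩
      · rintro ⟨i, j, h1, h2, h3, h4, h5⟩
        refine ⟨i, j, ?_, h2, h3, h4, h5⟩
        by_contra hlt
        exact h5 (hzero i h1 (by omega) j)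
    · rw [if_neg h2]
  have hkzero : ∀ l, ¬ blockNonzero A P' Q k l := by
    rintro l ⟨i, j, h1, h2, h3, h4, h5⟩
    rw [ht1 k le_rfl] at h1
    rw [ht2] at h2
    exact h5 (hzero i h1 h2 j)
  set F : ℕ × ℕ → ℕ × ℕ := fun kl => (f1 kl.1, kl.2) with hF
  have hFinj : Function.Injective F := by
    intro a b h
    simp only [hF, Prod.ext_iff] at h ⊢
    exact ⟨hf1inj h.1, h.2⟩
  set S := (Finset.range P.K ×ˢ Finset.range Q.K).filter
      (fun kl => blockNonzero A P Q kl.1 kl.2) with hS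
  set S' := (Finset.range P'.K ×ˢ Finset.range Q.K).filter
      (fun kl => blockNonzero A P' Q kl.1 kl.2) with hS'
  have hSim : S' = S.image F := by
    ext ⟨k'', l⟩
    simp only [hS, hS', Finset.mem_filter, Finset.mem_product, Finset.mem_range,
      Finset.mem_image, hK', hF, Prod.ext_iff]
    constructor
    · rintro ⟨⟨hk'', hl⟩, hb⟩
      have hne : k'' ≠ k := fun h => hkzero l (h ▸ hb)
      by_cases h1 : k'' < k
      · have hfe : f1 k'' = k'' := by simp only [hf1]; rw [if_pos h1]
        refine ⟨(k'', l), ⟨⟨by omega, hl⟩, ?_⟩, hfe, rfl⟩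
        rw [← hblock k'' (by omega) l, hfe]
        exact hb
      · have hk2 : k < k'' := by omega
        have hfe : f1 (k'' - 1) = k'' := by
          simp only [hf1]; rw [if_neg (by omega)]; omega
        refine ⟨(k'' - 1, l), ⟨⟨by omega, hl⟩, ?_⟩, hfe, rfl⟩
        rw [← hblock (k'' - 1) (by omega) l, hfe]
        exact hb
    · rintro ⟨⟨k', l'⟩, ⟨⟨hk', hl'⟩, hb⟩, he1, he2⟩
      subst he2
      refine ⟨⟨?_, hl'⟩, ?_⟩
      · simp only [hf1] at he1
        split at he1 <;> omega
      · rw [← he1]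
        exact (hblock k' hk' l').mpr hb
  have hNi : Nindex A P' Q = Nindex A P Q := by
    rw [Nindex, Nindex, ← hS, ← hS', hSim, Finset.card_image_of_injective _ hFinj]
  have hterm : ∀ kl ∈ S,
      (P'.t ((F kl).1 + 1) - P'.t (F kl).1) * (Q.t ((F kl).2 + 1) - Q.t (F kl).2)
        = ((P.t (kl.1 + 1) - (if kl.1 = k then c else P.t kl.1))
            * (Q.t (kl.2 + 1) - Q.t kl.2)) := by
    rintro ⟨k', l⟩ hmem
    simp only [hS, Finset.mem_filter, Finset.mem_product, Finset.mem_range] at hmem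
    simp only [hF]
    rw [hlo k' hmem.1.1, hhi k' hmem.1.1]
  have hNv : Nvalue A P' Q = ∑ kl ∈ S,
      ((P.t (kl.1 + 1) - (if kl.1 = k then c else P.t kl.1))
        * (Q.t (kl.2 + 1) - Q.t kl.2)) := by
    rw [Nvalue, ← hS', hSim, Finset.sum_image (fun x _ y _ h => hFinj h)]
    exact Finset.sum_congr rfl hterm
  have hle : ∀ kl ∈ S,
      ((P.t (kl.1 + 1) - (if kl.1 = k then c else P.t kl.1))
        * (Q.t (kl.2 + 1) - Q.t kl.2))
      ≤ (P.t (kl.1 + 1) - P.t kl.1) * (Q.t (kl.2 + 1) - Q.t kl.2) := by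
    rintro ⟨k', l⟩ _
    simp only
    by_cases h : k' = k
    · subst h
      rw [if_pos rfl]
      exact Nat.mul_le_mul_right _ (by omega)
    · rw [if_neg h]
  refine ⟨hNi, ?_, ?_⟩
  · rw [hNv, Nvalue, ← hS]
    exact Finset.sum_le_sum hle
  · rintro ⟨i, j, hci, hib, hij⟩
    obtain ⟨l, hlK, hjl, hjl'⟩ := find_part Q (j : ℕ) j.isLt
    have hmem : (k, l) ∈ S := by
      simp only [hS, Finset.mem_filter, Finset.mem_product, Finset.mem_range]
      exact ⟨⟨hk, hlK⟩, i, j, by omega, hib, hjl, hjl', hij⟩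
    rw [hNv, Nvalue, ← hS]
    apply Finset.sum_lt_sum hle
    refine ⟨(k, l), hmem, ?_⟩
    show (P.t (k + 1) - if k = k then c else P.t k) * (Q.t (l + 1) - Q.t l)
        < (P.t (k + 1) - P.t k) * (Q.t (l + 1) - Q.t l)
    rw [if_pos rfl]
    exact (Nat.mul_lt_mul_right (by omega)).mpr (by omega)
end

section
/- Let A be an m×n real matrix, Φ any contiguous column partition of {1,…,n}, and Π a contiguous row partition of {1,…,m} having a part Π_k = {a,…,b}. Suppose a < c ≤ d < b and every entry of A in rows c,…,d is zero. Let Π′ be the contiguous row partition obtained from Π by replacing the part Π_k with the three parts {a,…,c−1}, {c,…,d}, {d+1,…,b}. Then for every real number s with 0 ≤ s < d−c+1, one has s·N_index(A,Π′,Φ) + N_value(A,Π′,Φ) ≤ s·N_index(A,Π,Φ) + N_value(A,Π,Φ), and the inequality is strict whenever A has a nonzero entry in some row in {a,…,b}. -/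
open Finset
open scoped Classical

/-- Every column index lies in some part of a contiguous partition. -/
lemma ContigPartition.exists_mem_part {n : ℕ} (R : ContigPartition n) (j : Fin n) :
    ∃ l, l < R.K ∧ R.t l ≤ (j : ℕ) ∧ (j : ℕ) < R.t (l + 1) := by
  have hn : 0 < n := j.pos
  have hK : 0 < R.K := by
    by_contra h
    have h0 : R.K = 0 := by omega
    have := R.tK
    rw [h0, R.t0] at this
    omega
  have hne : ((Finset.range R.K).filter (fun l => R.t l ≤ (j : ℕ))).Nonempty :=
    ⟨0, by simp [hK, R.t0]⟩
  set S := (Finset.range R.K).filter (fun l => R.t l ≤ (j : ℕ))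
  have hmem := Finset.mem_filter.mp (S.max'_mem hne)
  have hmax : S.max' hne < R.K := Finset.mem_range.mp hmem.1
  refine ⟨S.max' hne, hmax, hmem.2, ?_⟩
  by_contra h
  push_neg at h
  have hlt : S.max' hne + 1 < R.K := by
    rcases Nat.lt_or_ge (S.max' hne + 1) R.K with h' | h'
    · exact h'
    · exfalso
      have heq : S.max' hne + 1 = R.K := by omega
      rw [heq, R.tK] at h
      omega
  have hmem2 : S.max' hne + 1 ∈ S :=
    Finset.mem_filter.mpr ⟨Finset.mem_range.mpr hlt, h⟩
  have := S.le_max' _ hmem2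
  omega

/-- The contribution of block `(k, l)` to the VBR cost `s·N_index + N_value`. -/
noncomputable def gfun {m n : ℕ} (A : Matrix (Fin m) (Fin n) ℝ)
    (Q : ContigPartition n) (s : ℝ) (P : ContigPartition m) (k l : ℕ) : ℝ :=
  if blockNonzero A P Q k l then
    s + (((P.t (k + 1) - P.t k) * (Q.t (l + 1) - Q.t l) : ℕ) : ℝ) else 0

/-- The VBR cost is the sum over all blocks of their contributions. -/
lemma cost_eq {m n : ℕ} (A : Matrix (Fin m) (Fin n) ℝ)
    (Q : ContigPartition n) (s : ℝ) (P : ContigPartition m) :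
    s * (Nindex A P Q : ℝ) + (Nvalue A P Q : ℝ)
      = ∑ l ∈ Finset.range Q.K, ∑ k ∈ Finset.range P.K, gfun A Q s P k l := by
  rw [Nindex, Nvalue]
  rw [show (∑ l ∈ Finset.range Q.K, ∑ k ∈ Finset.range P.K, gfun A Q s P k l)
      = ∑ kl ∈ Finset.range P.K ×ˢ Finset.range Q.K, gfun A Q s P kl.1 kl.2 from
    (Finset.sum_product_right' _ _ _).symm]
  rw [show (∑ kl ∈ Finset.range P.K ×ˢ Finset.range Q.K, gfun A Q s P kl.1 kl.2)
      = ∑ kl ∈ (Finset.range P.K ×ˢ Finset.range Q.K).filter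
          (fun kl => blockNonzero A P Q kl.1 kl.2),
          (s + (((P.t (kl.1 + 1) - P.t kl.1) * (Q.t (kl.2 + 1) - Q.t kl.2) : ℕ) : ℝ)) from by
    rw [Finset.sum_filter]; rfl]
  rw [Finset.sum_add_distrib, Finset.sum_const, nsmul_eq_mul]
  push_cast
  ring

/-- Splitting a run of all-zero ('filler') rows `{c,…,d}` out of the interior of a
row part `[P.t k, P.t (k+1))` (producing the three parts `[P.t k, c)`, `[c, d+1)`,
`[d+1, P.t (k+1))`) never increases the VBR cost `s·N_index + N_value` provided
`0 ≤ s < d − c + 1`, and strictly decreases it if `A` has a nonzero entry in some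
row of the original part. -/
theorem split_interior_zero_rows {m n : ℕ} (A : Matrix (Fin m) (Fin n) ℝ)
    (Q : ContigPartition n) (P P' : ContigPartition m)
    (k : ℕ) (hk : k < P.K) (c d : ℕ)
    (hac : P.t k < c) (hcd : c ≤ d) (hdb : d + 1 < P.t (k + 1))
    (hzero : ∀ i : Fin m, c ≤ (i : ℕ) → (i : ℕ) ≤ d → ∀ j : Fin n, A i j = 0)
    (hK' : P'.K = P.K + 2)
    (ht1 : ∀ k' ≤ k, P'.t k' = P.t k')
    (ht2 : P'.t (k + 1) = c) (ht3 : P'.t (k + 2) = d + 1)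
    (ht4 : ∀ k', k + 1 ≤ k' → k' ≤ P.K → P'.t (k' + 2) = P.t k')
    (s : ℝ) (hs0 : 0 ≤ s) (hs1 : s < (d : ℝ) - (c : ℝ) + 1) :
    s * (Nindex A P' Q : ℝ) + (Nvalue A P' Q : ℝ)
        ≤ s * (Nindex A P Q : ℝ) + (Nvalue A P Q : ℝ) ∧
    ((∃ i : Fin m, ∃ j : Fin n, P.t k ≤ (i : ℕ) ∧ (i : ℕ) < P.t (k + 1) ∧ A i j ≠ 0) →
      s * (Nindex A P' Q : ℝ) + (Nvalue A P' Q : ℝ)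
        < s * (Nindex A P Q : ℝ) + (Nvalue A P Q : ℝ)) := by
  have e1 : P'.t k = P.t k := ht1 k le_rfl
  have e4 : P'.t (k + 3) = P.t (k + 1) := by
    have := ht4 (k + 1) le_rfl (by omega)
    simpa [show k + 1 + 2 = k + 3 by ring] using this
  set e : ℕ → ℕ := fun a => if a ≤ k then a else a + 2 with he
  have hek : e k = k := by simp only [he]; rw [if_pos le_rfl]
  have hsplit : Finset.range (P.K + 2)
      = insert (k + 1) (insert (k + 2) ((Finset.range P.K).image e)) := by
    ext x
    simp only [Finset.mem_range, Finset.mem_insert, Finset.mem_image]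
    constructor
    · intro hx
      rcases Nat.lt_or_ge x (k + 1) with h | h
      · right; right
        exact ⟨x, by omega, by simp only [he]; rw [if_pos (by omega)]⟩
      · rcases Nat.eq_or_lt_of_le h with h' | h'
        · left; omega
        · rcases Nat.eq_or_lt_of_le h' with h'' | h''
          · right; left; omega
          · right; right
            refine ⟨x - 2, by omega, ?_⟩
            simp only [he]
            rw [if_neg (by omega)]
            omega
    · rintro (rfl | rfl | ⟨a, ha, rfl⟩)
      · omega
      · omega
      · simp only [he]; split_ifs <;> omega
  have hnm2 : (k + 2) ∉ (Finset.range P.K).image e := by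
    simp only [Finset.mem_image, Finset.mem_range, not_exists]
    rintro a ⟨ha, hea⟩
    simp only [he] at hea
    split_ifs at hea <;> omega
  have hnm1 : (k + 1) ∉ insert (k + 2) ((Finset.range P.K).image e) := by
    simp only [Finset.mem_insert, Finset.mem_image, Finset.mem_range, not_or, not_exists]
    refine ⟨by omega, ?_⟩
    rintro a ⟨ha, hea⟩
    simp only [he] at hea
    split_ifs at hea <;> omega
  have himg : ∀ x ∈ Finset.range P.K, ∀ y ∈ Finset.range P.K, e x = e y → x = y := by
    intro x _ y _ hxy
    simp only [he] at hxy
    split_ifs at hxy <;> omega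
  -- blocks of P' relate to blocks of P
  have hb1 : ∀ l, blockNonzero A P' Q k l → blockNonzero A P Q k l := by
    rintro l ⟨i, j, h1, h2, h3, h4, h5⟩
    rw [e1] at h1; rw [ht2] at h2
    exact ⟨i, j, h1, by omega, h3, h4, h5⟩
  have hb3 : ∀ l, blockNonzero A P' Q (k + 2) l → blockNonzero A P Q k l := by
    rintro l ⟨i, j, h1, h2, h3, h4, h5⟩
    rw [ht3] at h1
    rw [show k + 2 + 1 = k + 3 by ring, e4] at h2
    exact ⟨i, j, by omega, h2, h3, h4, h5⟩
  have hb2 : ∀ l, ¬ blockNonzero A P' Q (k + 1) l := by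
    rintro l ⟨i, j, h1, h2, h3, h4, h5⟩
    rw [ht2] at h1
    rw [show k + 1 + 1 = k + 2 by ring, ht3] at h2
    exact h5 (hzero i h1 (by omega) j)
  -- blocks away from `k` are identical
  have hsame : ∀ l, ∀ a ∈ (Finset.range P.K).erase k,
      gfun A Q s P' (e a) l = gfun A Q s P a l := by
    intro l a ha
    rw [Finset.mem_erase, Finset.mem_range] at ha
    rcases Nat.lt_or_ge a k with h | h
    · have hea : e a = a := by simp only [he]; rw [if_pos (by omega)]
      rw [hea]
      have t1 : P'.t a = P.t a := ht1 a (by omega)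
      have t2 : P'.t (a + 1) = P.t (a + 1) := ht1 (a + 1) (by omega)
      have hiff : blockNonzero A P' Q a l ↔ blockNonzero A P Q a l := by
        unfold blockNonzero; rw [t1, t2]
      simp only [gfun, t1, t2, hiff]
    · have hk' : k < a := by omega
      have hea : e a = a + 2 := by simp only [he]; rw [if_neg (by omega)]
      rw [hea]
      have t1 : P'.t (a + 2) = P.t a := ht4 a (by omega) (by omega)
      have t2 : P'.t (a + 2 + 1) = P.t (a + 1) := by
        have := ht4 (a + 1) (by omega) (by omega)
        simpa [show a + 1 + 2 = a + 2 + 1 by ring] using this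
      have hiff : blockNonzero A P' Q (a + 2) l ↔ blockNonzero A P Q a l := by
        unfold blockNonzero; rw [t1, t2]
      simp only [gfun, t1, t2, hiff]
  -- the key pointwise inequality at part `k`
  have key : ∀ l < Q.K,
      gfun A Q s P' k l + gfun A Q s P' (k + 2) l ≤ gfun A Q s P k l ∧
      (blockNonzero A P Q k l →
        gfun A Q s P' k l + gfun A Q s P' (k + 2) l < gfun A Q s P k l) := by
    intro l hl
    have hcl : 0 < Q.t (l + 1) - Q.t l := by have := Q.mono l hl; omega
    by_cases h : blockNonzero A P Q k l
    · have hg : gfun A Q s P k l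
          = s + (((P.t (k + 1) - P.t k) * (Q.t (l + 1) - Q.t l) : ℕ) : ℝ) := if_pos h
      have hg1 : gfun A Q s P' k l
          ≤ s + (((c - P.t k) * (Q.t (l + 1) - Q.t l) : ℕ) : ℝ) := by
        rw [gfun]
        split_ifs
        · rw [ht2, e1]
        · positivity
      have hg3 : gfun A Q s P' (k + 2) l
          ≤ s + (((P.t (k + 1) - (d + 1)) * (Q.t (l + 1) - Q.t l) : ℕ) : ℝ) := by
        rw [gfun]
        split_ifs
        · rw [show k + 2 + 1 = k + 3 by ring, e4, ht3]
        · positivity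
      have hw : (P.t (k + 1) - P.t k) * (Q.t (l + 1) - Q.t l)
          = (c - P.t k) * (Q.t (l + 1) - Q.t l)
            + (d + 1 - c) * (Q.t (l + 1) - Q.t l)
            + (P.t (k + 1) - (d + 1)) * (Q.t (l + 1) - Q.t l) := by
        rw [← Nat.add_mul, ← Nat.add_mul]
        congr 1
        omega
      have hs2 : s < (((d + 1 - c) * (Q.t (l + 1) - Q.t l) : ℕ) : ℝ) := by
        have h1 : (d + 1 - c : ℕ) ≤ (d + 1 - c) * (Q.t (l + 1) - Q.t l) :=
          Nat.le_mul_of_pos_right _ hcl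
        have h2 : ((d + 1 - c : ℕ) : ℝ) = (d : ℝ) - c + 1 := by
          rw [Nat.cast_sub (by omega)]
          push_cast
          ring
        calc s < (d : ℝ) - c + 1 := hs1
          _ = ((d + 1 - c : ℕ) : ℝ) := h2.symm
          _ ≤ _ := Nat.cast_le.mpr h1
      have hstrict : gfun A Q s P' k l + gfun A Q s P' (k + 2) l < gfun A Q s P k l := by
        rw [hg, hw]
        push_cast at hg1 hg3 hs2 ⊢
        linarith
      exact ⟨le_of_lt hstrict, fun _ => hstrict⟩
    · have z0 : gfun A Q s P k l = 0 := if_neg h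
      have z1 : gfun A Q s P' k l = 0 := if_neg (fun h' => h (hb1 l h'))
      have z3 : gfun A Q s P' (k + 2) l = 0 := if_neg (fun h' => h (hb3 l h'))
      rw [z0, z1, z3]
      exact ⟨by norm_num, fun h' => absurd h' h⟩
  -- the per-column sum inequality
  have hkmem : k ∈ Finset.range P.K := Finset.mem_range.mpr hk
  have keysum : ∀ l < Q.K,
      (∑ a ∈ Finset.range P'.K, gfun A Q s P' a l)
        ≤ (∑ a ∈ Finset.range P.K, gfun A Q s P a l) ∧
      (blockNonzero A P Q k l →
        (∑ a ∈ Finset.range P'.K, gfun A Q s P' a l)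
          < (∑ a ∈ Finset.range P.K, gfun A Q s P a l)) := by
    intro l hl
    have hdecomp : ∑ a ∈ Finset.range P'.K, gfun A Q s P' a l
        = (∑ a ∈ Finset.range P.K, gfun A Q s P' (e a) l)
          + gfun A Q s P' (k + 1) l + gfun A Q s P' (k + 2) l := by
      rw [hK', hsplit, Finset.sum_insert hnm1, Finset.sum_insert hnm2,
        Finset.sum_image himg]
      ring
    have hA : ∑ a ∈ Finset.range P.K, gfun A Q s P' (e a) l
        = (∑ a ∈ (Finset.range P.K).erase k, gfun A Q s P a l) + gfun A Q s P' k l := by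
      rw [← Finset.sum_erase_add _ _ hkmem]
      congr 1
      · exact Finset.sum_congr rfl (hsame l)
      · rw [hek]
    have hB : ∑ a ∈ Finset.range P.K, gfun A Q s P a l
        = (∑ a ∈ (Finset.range P.K).erase k, gfun A Q s P a l) + gfun A Q s P k l :=
      (Finset.sum_erase_add _ _ hkmem).symm
    have hz2 : gfun A Q s P' (k + 1) l = 0 := if_neg (hb2 l)
    obtain ⟨hle, hlt⟩ := key l hl
    constructor
    · rw [hdecomp, hA, hB, hz2]
      linarith
    · intro hbnz
      rw [hdecomp, hA, hB, hz2]
      linarith [hlt hbnz]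
  rw [cost_eq A Q s P, cost_eq A Q s P']
  constructor
  · exact Finset.sum_le_sum (fun l hl => (keysum l (Finset.mem_range.mp hl)).1)
  · rintro ⟨i, j, h1, h2, h5⟩
    obtain ⟨l, hl, hl1, hl2⟩ := Q.exists_mem_part j
    have hbnz : blockNonzero A P Q k l := ⟨i, j, h1, h2, hl1, hl2, h5⟩
    exact Finset.sum_lt_sum (fun l' hl' => (keysum l' (Finset.mem_range.mp hl')).1)
      ⟨l, Finset.mem_range.mpr hl, (keysum l hl).2 hbnz⟩
end

section
/- Let u, w be integers with u ≥ 2 and w ≥ 2, and let B be the (u+1)×(w+1) real matrix all of whose entries equal 1 except B[1, w+1] = 0 and B[u+1, 1] = 0 (the upper-right and lower-left corners). Then the minimum of N_index(B,Π,Φ) over all contiguous row partitions Π of {1,…,u+1} in which every part has size at most u and all contiguous column partitions Φ of {1,…,w+1} in which every part has size at most w is exactly 3. -/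
open Finset
open scoped Classical

/-!
Part sizes are at most `u` (resp. `w`), so rows `0` and `u` never share a part, nor do columns
`0` and `w`; hence the nonzero corners `(0,0)` and `(u,w)` lie in different blocks. Column `1`
supplies a third block: if it shares a part with column `0`, the entry `(u,1)` lies in the block
of row `u` and column `0`; otherwise `(0,1)` lies in the block of row `0` and column `1`.
Splitting off row `0` and column `w` attains the bound: of its four blocks only the one holding
the zero corner `(0,w)` vanishes.
-/

namespace ContigPartition

variable {m : ℕ} (P : ContigPartition m)

/-- The index of the part containing `i`; junk for `i ≥ m`. -/
def part (i : ℕ) : ℕ :=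
  Nat.findGreatest (fun k => P.t k ≤ i) P.K

theorem part_spec {i : ℕ} (hi : i < m) :
    P.part i < P.K ∧ P.t (P.part i) ≤ i ∧ i < P.t (P.part i + 1) := by
  have hle : P.t (P.part i) ≤ i :=
    Nat.findGreatest_spec (P := fun k => P.t k ≤ i) (Nat.zero_le _) (by simp [P.t0])
  have hlt : P.part i < P.K := by
    refine lt_of_le_of_ne (Nat.findGreatest_le _) fun h => ?_
    rw [h, P.tK] at hle
    omega
  exact ⟨hlt, hle, not_le.mp
    (Nat.findGreatest_is_greatest (P := fun k => P.t k ≤ i) (Nat.lt_succ_self _) hlt)⟩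

def PartSizeLE (d : ℕ) : Prop :=
  ∀ k < P.K, P.t (k + 1) - P.t k ≤ d

theorem part_ne_part {d i j : ℕ} (hP : P.PartSizeLE d)
    (hij : i + d ≤ j) (hj : j < m) : P.part i ≠ P.part j := by
  intro h
  obtain ⟨hk, hti, -⟩ := P.part_spec (i := i) (by omega)
  obtain ⟨-, -, htj⟩ := P.part_spec hj
  have := hP _ hk
  rw [← h] at htj
  omega

def splitAt (m a : ℕ) (ha : 0 < a) (ham : a < m) : ContigPartition m where
  K := 2
  t k := if k = 0 then 0 else if k = 1 then a else m
  t0 := rfl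
  tK := rfl
  mono k hk := by interval_cases k <;> simp [ha, ham]

theorem splitAt_size_le {m a d : ℕ} (ha : 0 < a) (ham : a < m) (had : a ≤ d)
    (hmad : m - a ≤ d) : (splitAt m a ha ham).PartSizeLE d := by
  intro k (hk : k < 2)
  interval_cases k <;> simp [splitAt, had, hmad]

end ContigPartition

section Blocks

variable {m n : ℕ} (A : Matrix (Fin m) (Fin n) ℝ) (P : ContigPartition m)
  (Q : ContigPartition n)

noncomputable def nonzeroBlocks : Finset (ℕ × ℕ) :=
  (range P.K ×ˢ range Q.K).filter (fun kl => blockNonzero A P Q kl.1 kl.2)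

theorem Nindex_eq_card_nonzeroBlocks : Nindex A P Q = (nonzeroBlocks A P Q).card := rfl

theorem mem_nonzeroBlocks_of_ne_zero {i : Fin m} {j : Fin n} (h : A i j ≠ 0) :
    (P.part i, Q.part j) ∈ nonzeroBlocks A P Q := by
  obtain ⟨hk, hik, hik'⟩ := P.part_spec i.isLt
  obtain ⟨hl, hjl, hjl'⟩ := Q.part_spec j.isLt
  simp only [nonzeroBlocks, mem_filter, mem_product, mem_range]
  exact ⟨⟨hk, hl⟩, i, j, hik, hik', hjl, hjl', h⟩

theorem Nindex_lt_of_not_blockNonzero {k l : ℕ} (hk : k < P.K) (hl : l < Q.K)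
    (h : ¬ blockNonzero A P Q k l) : Nindex A P Q < P.K * Q.K := by
  rw [Nindex_eq_card_nonzeroBlocks, ← card_range P.K, ← card_range Q.K, ← card_product]
  exact card_lt_card (filter_ssubset.mpr ⟨(k, l), by simp [hk, hl], h⟩)

end Blocks

theorem three_le_Nindex {u w : ℕ} (A : Matrix (Fin (u + 1)) (Fin (w + 1)) ℝ)
    (P : ContigPartition (u + 1)) (Q : ContigPartition (w + 1))
    (hP : P.PartSizeLE u) (hQ : Q.PartSizeLE w)
    (h00 : A 0 0 ≠ 0) (hlast : A (Fin.last u) (Fin.last w) ≠ 0) (j : Fin (w + 1))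
    (htop : A 0 j ≠ 0) (hbot : A (Fin.last u) j ≠ 0) : 3 ≤ Nindex A P Q := by
  have hrow : P.part 0 ≠ P.part u := P.part_ne_part hP (by omega) (by omega)
  have hcol : Q.part 0 ≠ Q.part w := Q.part_ne_part hQ (by omega) (by omega)
  have mem {i j} (h : A i j ≠ 0) := mem_nonzeroBlocks_of_ne_zero A P Q h
  obtain ⟨b, hb, hb0, hbu⟩ : ∃ b ∈ nonzeroBlocks A P Q,
      b ≠ (P.part 0, Q.part 0) ∧ b ≠ (P.part u, Q.part w) := by
    by_cases hj : Q.part j = Q.part 0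
    · refine ⟨_, mem hbot, ?_, ?_⟩ <;> simp [hj, hrow.symm, hcol]
    · refine ⟨_, mem htop, ?_, ?_⟩ <;> simp [hj, hrow]
  have hsub : {(P.part 0, Q.part 0), (P.part u, Q.part w), b} ⊆ nonzeroBlocks A P Q := by
    simp only [insert_subset_iff, singleton_subset_iff]
    exact ⟨mem h00, mem hlast, hb⟩
  calc 3 = ({(P.part 0, Q.part 0), (P.part u, Q.part w), b} : Finset (ℕ × ℕ)).card :=
        (card_eq_three.mpr ⟨_, _, _, by simp [hrow], hb0.symm, hbu.symm, rfl⟩).symm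
    _ ≤ (nonzeroBlocks A P Q).card := card_le_card hsub
    _ = Nindex A P Q := (Nindex_eq_card_nonzeroBlocks A P Q).symm

/-- For the `(u+1) × (w+1)` gadget matrix that is all nonzero except its
upper-right and lower-left corner entries, the minimum number of nonzero blocks
over all contiguous row partitions with parts of size at most `u` and column
partitions with parts of size at most `w` is exactly `3`. -/
theorem gadget_B1_min_blocks (u w : ℕ) (hu : 2 ≤ u) (hw : 2 ≤ w)
    (B : Matrix (Fin (u + 1)) (Fin (w + 1)) ℝ)
    (hB : ∀ (i : Fin (u + 1)) (j : Fin (w + 1)),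
      B i j = if ((i : ℕ) = 0 ∧ (j : ℕ) = w) ∨ ((i : ℕ) = u ∧ (j : ℕ) = 0)
        then 0 else 1) :
    IsLeast { x : ℕ | ∃ (P : ContigPartition (u + 1)) (Q : ContigPartition (w + 1)),
        (∀ k < P.K, P.t (k + 1) - P.t k ≤ u) ∧
        (∀ l < Q.K, Q.t (l + 1) - Q.t l ≤ w) ∧
        Nindex B P Q = x } 3 := by
  have entry_ne {i : Fin (u + 1)} {j : Fin (w + 1)}
      (h : ¬(((i : ℕ) = 0 ∧ (j : ℕ) = w) ∨ ((i : ℕ) = u ∧ (j : ℕ) = 0))) :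
      B i j ≠ 0 := by
    rw [hB, if_neg h]
    exact one_ne_zero
  have three_le := fun P Q hP hQ => three_le_Nindex B P Q hP hQ
    (entry_ne (by simp only [Fin.val_zero]; omega))
    (entry_ne (by simp only [Fin.val_last]; omega)) ⟨1, by omega⟩
    (entry_ne (by simp only [Fin.val_zero]; omega)) (entry_ne (by simp only [Fin.val_last]; omega))
  let P := ContigPartition.splitAt (u + 1) 1 one_pos (by omega)
  let Q := ContigPartition.splitAt (w + 1) w (by omega) (by omega)
  have hP : P.PartSizeLE u := ContigPartition.splitAt_size_le _ _ (by omega) (by omega)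
  have hQ : Q.PartSizeLE w := ContigPartition.splitAt_size_le _ _ le_rfl (by omega)
  have corner_block : ¬ blockNonzero B P Q 0 1 := by
    rintro ⟨i, j, -, hi, hj, -, hne⟩
    change (i : ℕ) < 1 at hi
    change w ≤ (j : ℕ) at hj
    exact hne (by rw [hB, if_pos (Or.inl ⟨by omega, by omega⟩)])
  refine ⟨⟨P, Q, hP, hQ, le_antisymm ?_ (three_le P Q hP hQ)⟩, ?_⟩
  · exact Nat.le_of_lt_succ
      (Nindex_lt_of_not_blockNonzero B P Q two_pos one_lt_two corner_block)
  · rintro x ⟨P, Q, hP, hQ, rfl⟩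
    exact three_le P Q hP hQ
end

section
/- Let u, w be integers with u ≥ 2 and w ≥ 2, and let B be the (u+1)×(w+1) real matrix all of whose entries equal 1 except B[1, w+1] = 0 and B[u+1, 1] = 0. Let Π be a contiguous row partition of {1,…,u+1} into exactly two parts and Φ a contiguous column partition of {1,…,w+1} into exactly two parts. Then N_index(B,Π,Φ) = 3 if and only if either (Π = ({1}, {2,…,u+1}) and Φ = ({1,…,w}, {w+1})) or (Π = ({1,…,u}, {u+1}) and Φ = ({1}, {2,…,w+1})); in every other case N_index(B,Π,Φ) = 4. -/
open Finset
open scoped Classical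

/-- For the corner gadget (all nonzero except the upper-right and lower-left
corners) and any contiguous row and column partitions into exactly two parts
each, the number of nonzero blocks is `3` exactly when the split isolates one of
the two zero corners (rows split after the first row and columns before the last
column, or rows split before the last row and columns after the first column);
in every other case it is `4`. -/
theorem gadget_two_part_blocks (u w : ℕ) (hu : 2 ≤ u) (hw : 2 ≤ w)
    (B : Matrix (Fin (u + 1)) (Fin (w + 1)) ℝ)
    (hB : ∀ (i : Fin (u + 1)) (j : Fin (w + 1)),
      B i j = if ((i : ℕ) = 0 ∧ (j : ℕ) = w) ∨ ((i : ℕ) = u ∧ (j : ℕ) = 0)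
        then 0 else 1)
    (P : ContigPartition (u + 1)) (Q : ContigPartition (w + 1))
    (hPK : P.K = 2) (hQK : Q.K = 2) :
    (Nindex B P Q = 3 ↔
      ((P.t 1 = 1 ∧ Q.t 1 = w) ∨ (P.t 1 = u ∧ Q.t 1 = 1))) ∧
    (¬((P.t 1 = 1 ∧ Q.t 1 = w) ∨ (P.t 1 = u ∧ Q.t 1 = 1)) →
      Nindex B P Q = 4) := by
  have ht2 : P.t 2 = u + 1 := by rw [← hPK]; exact P.tK
  have hs2 : Q.t 2 = w + 1 := by rw [← hQK]; exact Q.tK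
  have hp1 : 0 < P.t 1 := by
    have h := P.mono 0 (by rw [hPK]; norm_num)
    rwa [P.t0] at h
  have hp2 : P.t 1 ≤ u := by
    have h := P.mono 1 (by rw [hPK]; norm_num)
    simp only [Nat.reduceAdd] at h
    omega
  have hq1 : 0 < Q.t 1 := by
    have h := Q.mono 0 (by rw [hQK]; norm_num)
    rwa [Q.t0] at h
  have hq2 : Q.t 1 ≤ w := by
    have h := Q.mono 1 (by rw [hQK]; norm_num)
    simp only [Nat.reduceAdd] at h
    omega
  have hB1 : ∀ (i : Fin (u + 1)) (j : Fin (w + 1)),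
      ¬(((i : ℕ) = 0 ∧ (j : ℕ) = w) ∨ ((i : ℕ) = u ∧ (j : ℕ) = 0)) → B i j ≠ 0 := by
    intro i j h
    rw [hB, if_neg h]
    norm_num
  have hA : blockNonzero B P Q 0 0 := by
    refine ⟨⟨0, by omega⟩, ⟨0, by omega⟩, by simp [P.t0], by simpa using hp1,
      by simp [Q.t0], by simpa using hq1, hB1 _ _ (by simp; omega)⟩
  have hD : blockNonzero B P Q 1 1 := by
    refine ⟨⟨u, by omega⟩, ⟨w, by omega⟩, by simpa using hp2, by simp [ht2],
      by simpa using hq2, by simp [hs2], hB1 _ _ (by simp; omega)⟩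
  have hBiff : blockNonzero B P Q 0 1 ↔ ¬(P.t 1 = 1 ∧ Q.t 1 = w) := by
    constructor
    · rintro ⟨i, j, hi1, hi2, hj1, hj2, hnz⟩ ⟨hp, hq⟩
      apply hnz
      rw [P.t0] at hi1; rw [hp] at hi2; rw [hq] at hj1; rw [hs2] at hj2
      rw [hB, if_pos]
      left; omega
    · intro h
      rcases Decidable.not_and_iff_or_not.mp h with h' | h'
      · refine ⟨⟨1, by omega⟩, ⟨w, by omega⟩, by simp [P.t0], by simp; omega,
          by simpa using hq2, by simp [hs2], hB1 _ _ (by simp; omega)⟩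
      · refine ⟨⟨0, by omega⟩, ⟨Q.t 1, by omega⟩, by simp [P.t0], by simpa using hp1,
          by simp, by simp [hs2]; omega, hB1 _ _ (by simp; omega)⟩
  have hCiff : blockNonzero B P Q 1 0 ↔ ¬(P.t 1 = u ∧ Q.t 1 = 1) := by
    constructor
    · rintro ⟨i, j, hi1, hi2, hj1, hj2, hnz⟩ ⟨hp, hq⟩
      apply hnz
      rw [hp] at hi1; rw [ht2] at hi2; rw [Q.t0] at hj1; rw [hq] at hj2
      rw [hB, if_pos]
      right; omega
    · intro h
      rcases Decidable.not_and_iff_or_not.mp h with h' | h'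
      · refine ⟨⟨P.t 1, by omega⟩, ⟨0, by omega⟩, by simp, by simp [ht2]; omega,
          by simp [Q.t0], by simpa using hq1, hB1 _ _ (by simp; omega)⟩
      · refine ⟨⟨u, by omega⟩, ⟨1, by omega⟩, by simpa using hp2, by simp [ht2],
          by simp [Q.t0], by simp; omega, hB1 _ _ (by simp; omega)⟩
  have hprod : (Finset.range 2 ×ˢ Finset.range 2) =
      ({(0,0), (0,1), (1,0), (1,1)} : Finset (ℕ × ℕ)) := by decide
  have hN : Nindex B P Q =
      (({(0,0), (0,1), (1,0), (1,1)} : Finset (ℕ × ℕ)).filter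
        (fun kl => blockNonzero B P Q kl.1 kl.2)).card := by
    rw [Nindex, hPK, hQK, hprod]
  by_cases hc1 : P.t 1 = 1 ∧ Q.t 1 = w
  · have hc2 : ¬(P.t 1 = u ∧ Q.t 1 = 1) := by
      rintro ⟨h1, _⟩; omega
    have hfil : (({(0,0), (0,1), (1,0), (1,1)} : Finset (ℕ × ℕ)).filter
        (fun kl => blockNonzero B P Q kl.1 kl.2)) = {(0,0), (1,0), (1,1)} := by
      ext ⟨k, l⟩
      simp only [Finset.mem_filter, Finset.mem_insert, Finset.mem_singleton, Prod.mk.injEq]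
      constructor
      · rintro ⟨(⟨rfl, rfl⟩ | ⟨rfl, rfl⟩ | ⟨rfl, rfl⟩ | ⟨rfl, rfl⟩), hbl⟩ <;> simp_all
      · rintro (⟨rfl, rfl⟩ | ⟨rfl, rfl⟩ | ⟨rfl, rfl⟩) <;>
          simp_all [hCiff.mpr hc2]
    rw [hN, hfil]
    exact ⟨⟨fun _ => Or.inl hc1, fun _ => by decide⟩, fun h => absurd (Or.inl hc1) h⟩
  · by_cases hc2 : P.t 1 = u ∧ Q.t 1 = 1
    · have hfil : (({(0,0), (0,1), (1,0), (1,1)} : Finset (ℕ × ℕ)).filter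
          (fun kl => blockNonzero B P Q kl.1 kl.2)) = {(0,0), (0,1), (1,1)} := by
        ext ⟨k, l⟩
        simp only [Finset.mem_filter, Finset.mem_insert, Finset.mem_singleton, Prod.mk.injEq]
        constructor
        · rintro ⟨(⟨rfl, rfl⟩ | ⟨rfl, rfl⟩ | ⟨rfl, rfl⟩ | ⟨rfl, rfl⟩), hbl⟩ <;> simp_all
        · rintro (⟨rfl, rfl⟩ | ⟨rfl, rfl⟩ | ⟨rfl, rfl⟩) <;>
            simp_all [hBiff.mpr hc1]
      rw [hN, hfil]
      exact ⟨⟨fun _ => Or.inr hc2, fun _ => by decide⟩, fun h => absurd (Or.inr hc2) h⟩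
    · have hfil : (({(0,0), (0,1), (1,0), (1,1)} : Finset (ℕ × ℕ)).filter
          (fun kl => blockNonzero B P Q kl.1 kl.2)) = {(0,0), (0,1), (1,0), (1,1)} := by
        apply Finset.filter_true_of_mem
        intro ⟨k, l⟩ hkl
        simp only [Finset.mem_insert, Finset.mem_singleton, Prod.mk.injEq] at hkl
        rcases hkl with ⟨rfl, rfl⟩ | ⟨rfl, rfl⟩ | ⟨rfl, rfl⟩ | ⟨rfl, rfl⟩ <;>
          simp_all [hBiff.mpr hc1, hCiff.mpr hc2]
      rw [hN, hfil]
      exact ⟨⟨fun h => absurd h (by decide), fun h => (h.elim hc1 hc2).elim⟩, fun _ => by decide⟩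
end

section
/- Let D be the 3×3 real identity-pattern matrix (D[i,j] = 1 if i = j, else 0) and let E be the 3×3 anti-identity-pattern matrix (E[i,j] = 1 if i + j = 4, else 0). Let P_a denote the contiguous partition ({1,2},{3}) of {1,2,3} and P_b the contiguous partition ({1},{2,3}), and for a 3×3 matrix M and partitions Π, Φ of {1,2,3} write f(M,Π,Φ) := s·N_index(M,Π,Φ) + N_value(M,Π,Φ). Then for every real number s ≥ 1 and every pair Π₁, Π₂ ∈ {P_a, P_b} with Π₁ ≠ Π₂, the minimum over Φ ∈ {P_a, P_b} of f(D,Π₁,Φ) + f(E,Π₂,Φ) equals 10 + 4s; in particular this is strictly smaller than the value 13 + 5s attained when Π₁ = Π₂. -/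
open Finset
open scoped Classical

/-- The VBR cost `s·N_index + N_value`. -/
noncomputable def fcost {m n : ℕ} (s : ℝ) (A : Matrix (Fin m) (Fin n) ℝ)
    (P : ContigPartition m) (Q : ContigPartition n) : ℝ :=
  s * (Nindex A P Q : ℝ) + (Nvalue A P Q : ℝ)

/-- The 3×3 identity-pattern matrix. -/
def D3 : Matrix (Fin 3) (Fin 3) ℝ := fun i j => if i = j then 1 else 0

/-- The 3×3 anti-identity-pattern matrix. -/
def E3 : Matrix (Fin 3) (Fin 3) ℝ := fun i j => if (i : ℕ) + (j : ℕ) = 2 then 1 else 0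

/-- The contiguous partition `({1,2}, {3})` of `{1,2,3}`. -/
def Pa : ContigPartition 3 where
  K := 2
  t := fun k => if k = 0 then 0 else if k = 1 then 2 else 3
  t0 := rfl
  tK := by norm_num
  mono := by intro k hk; interval_cases k <;> norm_num

/-- The contiguous partition `({1}, {2,3})` of `{1,2,3}`. -/
def Pb : ContigPartition 3 where
  K := 2
  t := fun k => if k = 0 then 0 else if k = 1 then 1 else 3
  t0 := rfl
  tK := by norm_num
  mono := by intro k hk; interval_cases k <;> norm_num

lemma bn_D (P Q : ContigPartition 3) (k l : ℕ) :
    blockNonzero D3 P Q k l ↔ ∃ i j : Fin 3,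
      P.t k ≤ (i:ℕ) ∧ (i:ℕ) < P.t (k+1) ∧ Q.t l ≤ (j:ℕ) ∧ (j:ℕ) < Q.t (l+1) ∧ i = j := by
  unfold blockNonzero D3
  constructor <;> rintro ⟨i,j,h1,h2,h3,h4,h5⟩ <;> refine ⟨i,j,h1,h2,h3,h4,?_⟩
  · by_contra h; simp [h] at h5
  · simp [h5]

lemma bn_E (P Q : ContigPartition 3) (k l : ℕ) :
    blockNonzero E3 P Q k l ↔ ∃ i j : Fin 3,
      P.t k ≤ (i:ℕ) ∧ (i:ℕ) < P.t (k+1) ∧ Q.t l ≤ (j:ℕ) ∧ (j:ℕ) < Q.t (l+1) ∧ (i:ℕ)+(j:ℕ) = 2 := by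
  unfold blockNonzero E3
  constructor <;> rintro ⟨i,j,h1,h2,h3,h4,h5⟩ <;> refine ⟨i,j,h1,h2,h3,h4,?_⟩
  · by_contra h; simp [h] at h5
  · simp [h5]

lemma fc_D_aa (s : ℝ) : fcost s D3 Pa Pa = s * 2 + 5 := by
  have h1 : Nindex D3 Pa Pa = 2 := by
    simp only [Nindex, bn_D, Finset.filter_congr_decidable]; decide
  have h2 : Nvalue D3 Pa Pa = 5 := by
    simp only [Nvalue, bn_D, Finset.filter_congr_decidable]; decide
  simp [fcost, h1, h2]

lemma fc_D_ab (s : ℝ) : fcost s D3 Pa Pb = s * 3 + 8 := by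
  have h1 : Nindex D3 Pa Pb = 3 := by
    simp only [Nindex, bn_D, Finset.filter_congr_decidable]; decide
  have h2 : Nvalue D3 Pa Pb = 8 := by
    simp only [Nvalue, bn_D, Finset.filter_congr_decidable]; decide
  simp [fcost, h1, h2]

lemma fc_D_ba (s : ℝ) : fcost s D3 Pb Pa = s * 3 + 8 := by
  have h1 : Nindex D3 Pb Pa = 3 := by
    simp only [Nindex, bn_D, Finset.filter_congr_decidable]; decide
  have h2 : Nvalue D3 Pb Pa = 8 := by
    simp only [Nvalue, bn_D, Finset.filter_congr_decidable]; decide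
  simp [fcost, h1, h2]

lemma fc_D_bb (s : ℝ) : fcost s D3 Pb Pb = s * 2 + 5 := by
  have h1 : Nindex D3 Pb Pb = 2 := by
    simp only [Nindex, bn_D, Finset.filter_congr_decidable]; decide
  have h2 : Nvalue D3 Pb Pb = 5 := by
    simp only [Nvalue, bn_D, Finset.filter_congr_decidable]; decide
  simp [fcost, h1, h2]

lemma fc_E_aa (s : ℝ) : fcost s E3 Pa Pa = s * 3 + 8 := by
  have h1 : Nindex E3 Pa Pa = 3 := by
    simp only [Nindex, bn_E, Finset.filter_congr_decidable]; decide
  have h2 : Nvalue E3 Pa Pa = 8 := by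
    simp only [Nvalue, bn_E, Finset.filter_congr_decidable]; decide
  simp [fcost, h1, h2]

lemma fc_E_ab (s : ℝ) : fcost s E3 Pa Pb = s * 2 + 5 := by
  have h1 : Nindex E3 Pa Pb = 2 := by
    simp only [Nindex, bn_E, Finset.filter_congr_decidable]; decide
  have h2 : Nvalue E3 Pa Pb = 5 := by
    simp only [Nvalue, bn_E, Finset.filter_congr_decidable]; decide
  simp [fcost, h1, h2]

lemma fc_E_ba (s : ℝ) : fcost s E3 Pb Pa = s * 2 + 5 := by
  have h1 : Nindex E3 Pb Pa = 2 := by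
    simp only [Nindex, bn_E, Finset.filter_congr_decidable]; decide
  have h2 : Nvalue E3 Pb Pa = 5 := by
    simp only [Nvalue, bn_E, Finset.filter_congr_decidable]; decide
  simp [fcost, h1, h2]

lemma fc_E_bb (s : ℝ) : fcost s E3 Pb Pb = s * 3 + 8 := by
  have h1 : Nindex E3 Pb Pb = 3 := by
    simp only [Nindex, bn_E, Finset.filter_congr_decidable]; decide
  have h2 : Nvalue E3 Pb Pb = 8 := by
    simp only [Nvalue, bn_E, Finset.filter_congr_decidable]; decide
  simp [fcost, h1, h2]

/-- Opposite-side edge gadgets: if the two gadget rows use different pairings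
`P1 ≠ P2 ∈ {Pa, Pb}`, the best joint cost over column partitions `Φ ∈ {Pa, Pb}`
is `10 + 4s`, strictly smaller than the same-side cost `13 + 5s`. -/
theorem opposite_side_edge_cost (s : ℝ) (hs : 1 ≤ s)
    (P1 P2 : ContigPartition 3)
    (h1 : P1 = Pa ∨ P1 = Pb) (h2 : P2 = Pa ∨ P2 = Pb) (hne : P1 ≠ P2) :
    min (fcost s D3 P1 Pa + fcost s E3 P2 Pa)
        (fcost s D3 P1 Pb + fcost s E3 P2 Pb) = 10 + 4 * s ∧
    10 + 4 * s < 13 + 5 * s := by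
  have hs0 : 0 < s := lt_of_lt_of_le one_pos hs
  refine ⟨?_, by linarith⟩
  rcases h1 with rfl | rfl <;> rcases h2 with rfl | rfl
  · exact absurd rfl hne
  · rw [fc_D_aa, fc_E_ba, fc_D_ab, fc_E_bb, min_eq_left (by linarith)]; ring
  · rw [fc_D_ba, fc_E_aa, fc_D_bb, fc_E_ab, min_eq_right (by linarith)]; ring
  · exact absurd rfl hne
end
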